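/- arXiv:1206.1473 — 2 statements merged into one kernel-verified Lean document; each statement's English description precedes it below -/
import Mathlib

section
/- The map V ↦ tr(A(V)_-^γ) is convex in V when γ ≥ 1, where A(V) = A_0 + V for a fixed symmetric matrix A_0 and V ranges over symmetric matrices; equivalently, tr(A_-^γ)^{1/γ} is a supremum of affine functions of A and hence (tr(A_-^γ))^{1/γ} is convex in A. -/
open Matrix

/-- `U * diag ((λᵢ)₋ ^ p) * U*`: the `p`-th power (real power) of the negative part
`A₋ = max (-A, 0)` of a symmetric matrix `A`, defined via the spectral decomposition. -/
noncomputable def negPartRpow {m : ℕ} {A : Matrix (Fin m) (Fin m) ℝ} (hA : A.IsHermitian)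
    (p : ℝ) : Matrix (Fin m) (Fin m) ℝ :=
  (hA.eigenvectorUnitary : Matrix (Fin m) (Fin m) ℝ) *
    Matrix.diagonal (fun i => (max (-(hA.eigenvalues i)) 0) ^ p) *
    star (hA.eigenvectorUnitary : Matrix (Fin m) (Fin m) ℝ)

/-- `tr(A₋^γ)`, extended by `0` to non-symmetric matrices. -/
noncomputable def trNegPow {m : ℕ} (γ : ℝ) (A : Matrix (Fin m) (Fin m) ℝ) : ℝ :=
  if h : A.IsHermitian then (negPartRpow h γ).trace else 0

/-!
If `U` is an orthonormal eigenbasis of a symmetric `A` and `V` is orthogonal, the diagonal of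
`Vᵀ A V` is the image of the spectrum `λ(A)` under the doubly stochastic matrix `((Vᵀ U)ᵢⱼ²)`,
so `∑ φ ((Vᵀ A V)ᵢᵢ) ≤ ∑ φ (λᵢ(A))` for convex `φ`. For `C = a A + b B`, take `V` to be an
eigenbasis of `C`: then `λ(C) = a diag (Vᵀ A V) + b diag (Vᵀ B V)`. Hence every convex `F` on
`ℝⁿ` with `F (diag (Vᵀ A V)) ≤ F (λ(A))` satisfies `F (λ(C)) ≤ a F (λ(A)) + b F (λ(B))`. Both
`x ↦ ∑ (xᵢ)₋^γ` and, by Minkowski's inequality, `x ↦ (∑ (xᵢ)₋^γ)^(1/γ)` are such functions.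
-/

open Finset Set

section Convexity

theorem convexOn_max_neg_zero : ConvexOn ℝ univ (fun x : ℝ => max (-x) 0) :=
  (concaveOn_id convex_univ).neg.sup (convexOn_const 0 convex_univ)

theorem convexOn_max_neg_zero_rpow {γ : ℝ} (hγ : 1 ≤ γ) :
    ConvexOn ℝ univ (fun x : ℝ => max (-x) 0 ^ γ) := by
  refine ⟨convex_univ, fun x _ y _ a b ha hb hab => ?_⟩
  calc max (-(a • x + b • y)) 0 ^ γ ≤ (a • max (-x) 0 + b • max (-y) 0) ^ γ :=
        Real.rpow_le_rpow (le_max_right _ _)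
          (convexOn_max_neg_zero.2 (mem_univ x) (mem_univ y) ha hb hab) (by linarith)
    _ ≤ a • max (-x) 0 ^ γ + b • max (-y) 0 ^ γ :=
        (convexOn_rpow hγ).2 (mem_Ici.2 (le_max_right _ _)) (mem_Ici.2 (le_max_right _ _))
          ha hb hab

theorem ConvexOn.comp_eval {ι : Type*} {φ : ℝ → ℝ} (hφ : ConvexOn ℝ univ φ) (i : ι) :
    ConvexOn ℝ univ (fun x : ι → ℝ => φ (x i)) :=
  ⟨convex_univ, fun _ _ _ _ _ _ ha hb hab => hφ.2 (mem_univ _) (mem_univ _) ha hb hab⟩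

variable {ι E : Type*} [Fintype ι] [AddCommGroup E] [Module ℝ E] {s : Set E}

theorem convexOn_sum_apply {f : ι → E → ℝ} (hs : Convex ℝ s) (hf : ∀ i, ConvexOn ℝ s (f i)) :
    ConvexOn ℝ s (fun x => ∑ i, f i x) := by
  refine ⟨hs, fun x hx y hy a b ha hb hab => ?_⟩
  simp only [smul_eq_mul, mul_sum, ← sum_add_distrib]
  exact sum_le_sum fun i _ => (hf i).2 hx hy ha hb hab

theorem rpow_sum_mul_rpow {a p : ℝ} (ha : 0 ≤ a) (hp : p ≠ 0) {u : ι → ℝ} (hu : ∀ i, 0 ≤ u i) :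
    (∑ i, (a * u i) ^ p) ^ (1 / p) = a * (∑ i, u i ^ p) ^ (1 / p) := by
  have hsum : 0 ≤ ∑ i, u i ^ p := sum_nonneg fun i _ => Real.rpow_nonneg (hu i) p
  simp_rw [Real.mul_rpow ha (hu _), ← mul_sum]
  rw [Real.mul_rpow (Real.rpow_nonneg ha p) hsum, ← Real.rpow_mul ha, mul_one_div_cancel hp,
    Real.rpow_one]

theorem convexOn_rpow_sum_rpow {f : ι → E → ℝ} {p : ℝ} (hp : 1 ≤ p) (hs : Convex ℝ s)
    (hf : ∀ i, ConvexOn ℝ s (f i)) (hf₀ : ∀ i, ∀ x ∈ s, 0 ≤ f i x) :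
    ConvexOn ℝ s (fun x => (∑ i, f i x ^ p) ^ (1 / p)) := by
  refine ⟨hs, fun x hx y hy a b ha hb hab => ?_⟩
  have hp₀ : 0 < p := by linarith
  have hfx i : 0 ≤ f i x := hf₀ i x hx
  have hfy i : 0 ≤ f i y := hf₀ i y hy
  have hfxy i : 0 ≤ f i (a • x + b • y) := hf₀ i _ (hs hx hy ha hb hab)
  have hpointwise i : f i (a • x + b • y) ^ p ≤ (a * f i x + b * f i y) ^ p :=
    Real.rpow_le_rpow (hfxy i) (by simpa using (hf i).2 hx hy ha hb hab) hp₀.le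
  calc (∑ i, f i (a • x + b • y) ^ p) ^ (1 / p)
      ≤ (∑ i, (a * f i x + b * f i y) ^ p) ^ (1 / p) :=
        Real.rpow_le_rpow (sum_nonneg fun i _ => Real.rpow_nonneg (hfxy i) p)
          (sum_le_sum fun i _ => hpointwise i) (by positivity)
    _ ≤ (∑ i, (a * f i x) ^ p) ^ (1 / p) + (∑ i, (b * f i y) ^ p) ^ (1 / p) :=
        Real.Lp_add_le_of_nonneg univ hp (fun i _ => mul_nonneg ha (hfx i))
          (fun i _ => mul_nonneg hb (hfy i))
    _ = a • (∑ i, f i x ^ p) ^ (1 / p) + b • (∑ i, f i y ^ p) ^ (1 / p) := by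
        rw [rpow_sum_mul_rpow ha hp₀.ne' hfx, rpow_sum_mul_rpow hb hp₀.ne' hfy, smul_eq_mul,
          smul_eq_mul]

end Convexity

section Spectral

theorem convex_setOf_isHermitian {n : Type*} : Convex ℝ {A : Matrix n n ℝ | A.IsHermitian} :=
  fun _ hA _ hB a b _ _ _ =>
    (hA.smul (IsSelfAdjoint.all a)).add (hB.smul (IsSelfAdjoint.all b))

variable {n : Type*} [Fintype n] [DecidableEq n]

theorem Matrix.IsHermitian.star_eigenvectorUnitary_mul_mul {A : Matrix n n ℝ}
    (hA : A.IsHermitian) :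
    star (hA.eigenvectorUnitary : Matrix n n ℝ) * A * hA.eigenvectorUnitary =
      diagonal hA.eigenvalues := by
  simpa [Unitary.conjStarAlgAut_star_apply] using hA.conjStarAlgAut_star_eigenvectorUnitary

theorem sum_map_diag_conj_diagonal_le {φ : ℝ → ℝ} (hφ : ConvexOn ℝ univ φ)
    {M : Matrix n n ℝ} (hM : M ∈ unitaryGroup n ℝ) (d : n → ℝ) :
    ∑ i, φ ((M * diagonal d * star M) i i) ≤ ∑ i, φ (d i) := by
  have hrow i : ∑ j, M i j ^ 2 = 1 := by
    simpa [Matrix.mul_apply, Matrix.one_apply, sq] using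
      congrFun₂ (mem_unitaryGroup_iff.mp hM) i i
  have hcol j : ∑ i, M i j ^ 2 = 1 := by
    simpa [Matrix.mul_apply, Matrix.one_apply, sq, mul_comm] using
      congrFun₂ (mem_unitaryGroup_iff'.mp hM) j j
  have hdiag i : (M * diagonal d * star M) i i = ∑ j, M i j ^ 2 • d j := by
    rw [Matrix.mul_apply]
    simp only [mul_diagonal, star_apply, star_trivial, smul_eq_mul]
    exact sum_congr rfl fun j _ => by ring
  calc ∑ i, φ ((M * diagonal d * star M) i i)
      ≤ ∑ i, ∑ j, M i j ^ 2 * φ (d j) := by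
        refine sum_le_sum fun i _ => ?_
        rw [hdiag]
        simpa using hφ.map_sum_le (fun j _ => sq_nonneg (M i j)) (hrow i)
          (fun j _ => mem_univ (d j))
    _ = ∑ j, φ (d j) := by
        rw [sum_comm]
        exact sum_congr rfl fun j _ => by rw [← sum_mul, hcol, one_mul]

theorem Matrix.IsHermitian.sum_map_diag_conj_le {A : Matrix n n ℝ} (hA : A.IsHermitian)
    {φ : ℝ → ℝ} (hφ : ConvexOn ℝ univ φ) {U : Matrix n n ℝ} (hU : U ∈ unitaryGroup n ℝ) :
    ∑ i, φ ((star U * A * U) i i) ≤ ∑ i, φ (hA.eigenvalues i) := by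
  set W : Matrix n n ℝ := (hA.eigenvectorUnitary : Matrix n n ℝ)
  have hA_eq : A = W * diagonal hA.eigenvalues * star W := by
    simpa using hA.spectral_theorem
  have hconj : star U * A * U = (star U * W) * diagonal hA.eigenvalues * star (star U * W) := by
    conv_lhs => rw [hA_eq]
    simp only [star_mul, star_star, Matrix.mul_assoc]
  rw [hconj]
  exact sum_map_diag_conj_diagonal_le hφ
    (mul_mem (Unitary.star_mem hU) hA.eigenvectorUnitary.2) hA.eigenvalues

theorem convexOn_of_eq_comp_eigenvalues {F : (n → ℝ) → ℝ} (hF : ConvexOn ℝ univ F)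
    (hF_diag : ∀ (A : Matrix n n ℝ) (hA : A.IsHermitian), ∀ U ∈ unitaryGroup n ℝ,
      F (fun i => (star U * A * U) i i) ≤ F hA.eigenvalues)
    {f : Matrix n n ℝ → ℝ}
    (hf : ∀ (A : Matrix n n ℝ) (hA : A.IsHermitian), f A = F hA.eigenvalues) :
    ConvexOn ℝ {A : Matrix n n ℝ | A.IsHermitian} f := by
  refine ⟨convex_setOf_isHermitian, fun A hA B hB a b ha hb hab => ?_⟩
  have hC : (a • A + b • B).IsHermitian := convex_setOf_isHermitian hA hB ha hb hab
  set U : Matrix n n ℝ := (hC.eigenvectorUnitary : Matrix n n ℝ)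
  have hU : U ∈ unitaryGroup n ℝ := hC.eigenvectorUnitary.2
  have hdiag : hC.eigenvalues =
      a • (fun i => (star U * A * U) i i) + b • (fun i => (star U * B * U) i i) := by
    funext i
    have := congrFun₂ hC.star_eigenvectorUnitary_mul_mul i i
    simp only [diagonal_apply_eq, Matrix.mul_add, Matrix.add_mul, Matrix.mul_smul,
      Matrix.smul_mul] at this
    simpa using this.symm
  calc f (a • A + b • B) = F hC.eigenvalues := hf _ hC
    _ ≤ a • F (fun i => (star U * A * U) i i) + b • F (fun i => (star U * B * U) i i) := by
        rw [hdiag]; exact hF.2 (mem_univ _) (mem_univ _) ha hb hab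
    _ ≤ a • f A + b • f B := by
        rw [hf A hA, hf B hB]
        gcongr
        exacts [hF_diag A hA U hU, hF_diag B hB U hU]

end Spectral

section NegPart

variable {m : ℕ}

theorem trNegPow_eq_sum {A : Matrix (Fin m) (Fin m) ℝ} (hA : A.IsHermitian) (γ : ℝ) :
    trNegPow γ A = ∑ i, max (-(hA.eigenvalues i)) 0 ^ γ := by
  rw [trNegPow, dif_pos hA, negPartRpow, trace_mul_cycle,
    mem_unitaryGroup_iff'.mp hA.eigenvectorUnitary.2, Matrix.one_mul, trace_diagonal]

theorem convexOn_trNegPow {γ : ℝ} (hγ : 1 ≤ γ) :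
    ConvexOn ℝ {A : Matrix (Fin m) (Fin m) ℝ | A.IsHermitian} (trNegPow γ) :=
  convexOn_of_eq_comp_eigenvalues
    (convexOn_sum_apply convex_univ fun i => (convexOn_max_neg_zero_rpow hγ).comp_eval i)
    (fun _ hA _ hU => hA.sum_map_diag_conj_le (convexOn_max_neg_zero_rpow hγ) hU)
    (fun _ hA => trNegPow_eq_sum hA γ)

theorem convexOn_trNegPow_rpow_one_div {γ : ℝ} (hγ : 1 ≤ γ) :
    ConvexOn ℝ {A : Matrix (Fin m) (Fin m) ℝ | A.IsHermitian}
      (fun A => trNegPow γ A ^ (1 / γ)) :=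
  convexOn_of_eq_comp_eigenvalues
    (convexOn_rpow_sum_rpow hγ convex_univ (fun i => convexOn_max_neg_zero.comp_eval i)
      (fun _ _ _ => le_max_right _ _))
    (fun _ hA _ hU => Real.rpow_le_rpow
      (sum_nonneg fun _ _ => Real.rpow_nonneg (le_max_right _ _) γ)
      (hA.sum_map_diag_conj_le (convexOn_max_neg_zero_rpow hγ) hU) (by positivity))
    (fun _ hA => by rw [trNegPow_eq_sum hA γ])

end NegPart

/-- For `γ ≥ 1`, `A ↦ (tr(A₋^γ))^(1/γ)` is convex on the set of symmetric matrices (being a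
supremum of the affine functions `A ↦ -tr(A τ)`), and consequently, for any fixed symmetric
`A₀`, the map `V ↦ tr((A₀ + V)₋^γ)` is convex in the symmetric matrix `V`. -/
theorem convexity_trace_negPart {m : ℕ} (γ : ℝ) (hγ : 1 ≤ γ) :
    ConvexOn ℝ {A : Matrix (Fin m) (Fin m) ℝ | A.IsHermitian}
      (fun A => (trNegPow γ A) ^ (1 / γ)) ∧
    ∀ A₀ : Matrix (Fin m) (Fin m) ℝ, A₀.IsHermitian →
      ConvexOn ℝ {V : Matrix (Fin m) (Fin m) ℝ | V.IsHermitian}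
        (fun V => trNegPow γ (A₀ + V)) :=
  ⟨convexOn_trNegPow_rpow_one_div hγ, fun A₀ hA₀ =>
    ((convexOn_trNegPow hγ).translate_right A₀).subset (fun _ hV => hA₀.add hV)
      convex_setOf_isHermitian⟩
end

section
/- If the sequence L_n satisfies L_{n+1} = L_n + K e^{-cL_n} with K, c > 0 and L_0 > 0, then L_n → ∞ and L_n = (1/c) log n + O(1) as n → ∞; in particular L_n / log n → 1/c. -/
/-!
The substitution `u n = exp (c * L n)` turns the recursion into `u (n+1) = u n * exp (c K / u n)`,
whose increments `u n * (exp (c K / u n) - 1)` lie between `c K` and `c K * exp (c K / u 0)`.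
Hence `u n` is comparable to `n`, i.e. `c * L n = log n + O(1)`.
-/

open Filter Real

lemma exp_le_one_add_mul_exp (x : ℝ) : exp x ≤ 1 + x * exp x := by
  have h := mul_le_mul_of_nonneg_right (one_sub_le_exp_neg x) (exp_pos x).le
  rw [← exp_add, neg_add_cancel, exp_zero] at h
  linarith

lemma add_le_mul_exp_div {u : ℝ} (a : ℝ) (hu : 0 < u) : u + a ≤ u * exp (a / u) :=
  calc u + a = u * (a / u + 1) := by field_simp; ring
    _ ≤ u * exp (a / u) := by gcongr; exact add_one_le_exp _

lemma mul_exp_div_le_add {u : ℝ} (a : ℝ) (hu : 0 < u) : u * exp (a / u) ≤ u + a * exp (a / u) :=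
  calc u * exp (a / u) ≤ u * (1 + a / u * exp (a / u)) := by
        gcongr; exact exp_le_one_add_mul_exp _
    _ = u + a * exp (a / u) := by field_simp

lemma add_mul_le_of_add_le_succ {f : ℕ → ℝ} {d : ℝ} (h : ∀ n, f n + d ≤ f (n + 1)) (n : ℕ) :
    f 0 + d * n ≤ f n := by
  induction n with
  | zero => simp
  | succ n ih => push_cast; linarith [h n]

lemma le_add_mul_of_succ_le_add {f : ℕ → ℝ} {d : ℝ} (h : ∀ n, f (n + 1) ≤ f n + d) (n : ℕ) :
    f n ≤ f 0 + d * n := by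
  induction n with
  | zero => simp
  | succ n ih => push_cast; linarith [h n]

/-- Every increment of `u` is at least `a`; as `u` increases, it is at most `a * exp (a / u 0)`. -/
lemma linear_growth_of_eq_mul_exp_div {u : ℕ → ℝ} {a : ℝ} (ha : 0 ≤ a) (hu0 : 0 < u 0)
    (hrec : ∀ n, u (n + 1) = u n * exp (a / u n)) (n : ℕ) :
    u 0 + a * n ≤ u n ∧ u n ≤ u 0 + a * exp (a / u 0) * n := by
  have hpos : ∀ n, 0 < u n := fun n => by
    induction n with
    | zero => exact hu0
    | succ n ih => rw [hrec]; positivity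
  have hlow := add_mul_le_of_add_le_succ fun n => (hrec n).symm ▸ add_le_mul_exp_div a (hpos n)
  refine ⟨hlow n, le_add_mul_of_succ_le_add (fun k => ?_) n⟩
  have hge : u 0 ≤ u k := (le_add_of_nonneg_right (by positivity)).trans (hlow k)
  calc u (k + 1) ≤ u k + a * exp (a / u k) := (hrec k).symm ▸ mul_exp_div_le_add a (hpos k)
    _ ≤ u k + a * exp (a / u 0) := by gcongr

lemma abs_log_sub_log_le_of_mul_le_of_le_mul {x y α β : ℝ} (hα : 0 < α) (hx : 0 < x)
    (hlo : α * x ≤ y) (hhi : y ≤ β * x) : |log y - log x| ≤ max |log α| |log β| := by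
  have hy : 0 < y := (mul_pos hα hx).trans_le hlo
  have hβ : 0 < β := pos_of_mul_pos_left (hy.trans_le hhi) hx.le
  have hlo' : log α + log x ≤ log y := by
    rw [← log_mul hα.ne' hx.ne']; exact log_le_log (by positivity) hlo
  have hhi' : log y ≤ log β + log x := by
    rw [← log_mul hβ.ne' hx.ne']; exact log_le_log hy hhi
  rw [abs_le]
  constructor <;> linarith [neg_abs_le (log α), le_abs_self (log β),
    le_max_left |log α| |log β|, le_max_right |log α| |log β|]

section BoundedDistance

variable {α : Type*} {l : Filter α} {f g : α → ℝ} {b M : ℝ}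

lemma tendsto_atTop_of_abs_sub_mul_le (hb : 0 < b) (hg : Tendsto g l atTop)
    (h : ∀ᶠ x in l, |f x - b * g x| ≤ M) : Tendsto f l atTop := by
  refine tendsto_atTop_mono' l ?_ (tendsto_atTop_add_const_right l (-M) (hg.const_mul_atTop hb))
  filter_upwards [h] with x hx
  linarith [(abs_le.1 hx).1]

lemma tendsto_div_of_abs_sub_mul_le (hg : Tendsto g l atTop)
    (h : ∀ᶠ x in l, |f x - b * g x| ≤ M) : Tendsto (fun x => f x / g x) l (nhds b) := by
  have hsub : Tendsto (fun x => f x / g x - b) l (nhds 0) := by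
    refine squeeze_zero_norm' ?_ ((tendsto_const_nhds (x := M)).div_atTop hg)
    filter_upwards [h, hg.eventually_gt_atTop 0] with x hx hgx
    rw [norm_eq_abs, div_sub' hgx.ne', abs_div, abs_of_pos hgx, mul_comm]
    gcongr
  simpa using hsub.add_const b

end BoundedDistance

theorem log_separation_general (K c : ℝ) (hK : 0 < K) (hc : 0 < c) (L : ℕ → ℝ)
    (hrec : ∀ n, L (n + 1) = L n + K * Real.exp (-c * L n)) :
    Tendsto L atTop atTop ∧
    (∃ M : ℝ, ∀ n : ℕ, 1 ≤ n → |L n - (1 / c) * Real.log n| ≤ M) ∧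
    Tendsto (fun n : ℕ => L n / Real.log n) atTop (nhds (1 / c)) := by
  set u : ℕ → ℝ := fun n => exp (c * L n)
  have hu_rec : ∀ n, u (n + 1) = u n * exp (c * K / u n) := fun n => by
    simp only [u, hrec, div_eq_mul_inv, ← exp_neg, ← exp_add]
    ring_nf
  set A := c * K * exp (c * K / u 0)
  have hbound : ∀ n : ℕ, 1 ≤ n →
      |L n - (1 / c) * log n| ≤ (1 / c) * max |log (c * K)| |log (u 0 + A)| := by
    intro n hn
    have hn' : (1 : ℝ) ≤ n := by exact_mod_cast hn
    have hu0 : 0 < u 0 := exp_pos _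
    obtain ⟨hlo, hhi⟩ := linear_growth_of_eq_mul_exp_div (by positivity) hu0 hu_rec n
    have hlog := abs_log_sub_log_le_of_mul_le_of_le_mul (by positivity) (by positivity)
      (by linarith : c * K * n ≤ u n) (by nlinarith : u n ≤ (u 0 + A) * n)
    have heq : L n - (1 / c) * log n = (1 / c) * (log (u n) - log n) := by
      simp only [u, log_exp]; field_simp
    rw [heq, abs_mul, abs_of_pos (by positivity)]
    gcongr
  have hlog_n : Tendsto (fun n : ℕ => log n) atTop atTop :=
    tendsto_log_atTop.comp tendsto_natCast_atTop_atTop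
  have hbound' := eventually_atTop.2 ⟨1, hbound⟩
  exact ⟨tendsto_atTop_of_abs_sub_mul_le (by positivity) hlog_n hbound', ⟨_, hbound⟩,
    tendsto_div_of_abs_sub_mul_le hlog_n hbound'⟩

/-- Logarithmic separation of bumps: if `L_{n+1} = L_n + K e^(-c L_n)` with `K, c > 0` and
`L₀ > 0`, then `L_n → ∞`, `L_n = (1/c) log n + O(1)`, and `L_n / log n → 1/c`. -/
theorem log_separation (K c : ℝ) (hK : 0 < K) (hc : 0 < c) (L : ℕ → ℝ) (hL0 : 0 < L 0)
    (hrec : ∀ n, L (n + 1) = L n + K * Real.exp (-c * L n)) :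
    Tendsto L atTop atTop ∧
    (∃ M : ℝ, ∀ n : ℕ, 1 ≤ n → |L n - (1 / c) * Real.log n| ≤ M) ∧
    Tendsto (fun n : ℕ => L n / Real.log n) atTop (nhds (1 / c)) :=
  log_separation_general K c hK hc L hrec
end
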